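/- arXiv:2508.20199 — 3 statements merged into one kernel-verified Lean document; each statement's English description precedes it below -/
import Mathlib

section
/- The center of the first Weyl algebra W = k⟨x,y⟩/(xy - yx - 1) over an algebraically closed field k of characteristic p > 0 is the polynomial subalgebra k[x^p, y^p]. -/
/-- The defining relation of the first Weyl algebra: `x * y = y * x + 1`. -/
inductive WeylRel (k : Type*) [CommRing k] :
    FreeAlgebra k (Fin 2) → FreeAlgebra k (Fin 2) → Prop
  | rel : WeylRel k (FreeAlgebra.ι k 0 * FreeAlgebra.ι k 1)
      (FreeAlgebra.ι k 1 * FreeAlgebra.ι k 0 + 1)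

/-- The first Weyl algebra `k⟨x,y⟩/(xy - yx - 1)`. -/
abbrev Weyl (k : Type*) [CommRing k] := RingQuot (WeylRel k)

/-- The image of `x` in the Weyl algebra. -/
noncomputable def Weyl.x (k : Type*) [CommRing k] : Weyl k :=
  RingQuot.mkAlgHom k (WeylRel k) (FreeAlgebra.ι k 0)

/-- The image of `y` in the Weyl algebra. -/
noncomputable def Weyl.y (k : Type*) [CommRing k] : Weyl k :=
  RingQuot.mkAlgHom k (WeylRel k) (FreeAlgebra.ι k 1)


/-! The monomials `y^a x^b` form a `k`-basis of the Weyl algebra: they span because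
`x y = y x + 1` moves every `x` to the right, and they are linearly independent because in the
representation `x ↦ X₀ + ∂/∂X₁`, `y ↦ X₁` on `k[X₀, X₁]` the monomial `y^a x^b` sends `1` to
`X₁^a X₀^b`. In this basis `z ↦ y (x z - z x)` and `z ↦ (z y - y z) x` are diagonal, with
eigenvalues `a` and `b` on `y^a x^b`. Both vanish on a central element, so it only involves
monomials with `a = b = 0` in `k`, that is `p ∣ a` and `p ∣ b`. Conversely `x^p` and `y^p` are
central because `[x^p, y] = p x^(p-1)` and `[x, y^p] = p y^(p-1)`. -/

theorem Module.Basis.repr_map_apply_of_eigen {ι R M : Type*} [CommSemiring R] [AddCommMonoid M]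
    [Module R M] (b : Module.Basis ι R M) {f : M →ₗ[R] M} {c : ι → R}
    (hf : ∀ i, f (b i) = c i • b i) (z : M) (i : ι) : b.repr (f z) i = c i * b.repr z i := by
  have hcoord : b.coord i ∘ₗ f = c i • b.coord i := b.ext fun j => by
    rcases eq_or_ne j i with rfl | hji
    · simp [hf]
    · simp [hf, hji]
  exact LinearMap.congr_fun hcoord z

namespace Weyl

open MvPolynomial (X pderiv pderiv_X_self basisMonomials)

section CommRing

variable (k : Type*) [CommRing k]

theorem x_mul_y : x k * y k = y k * x k + 1 := by
  simpa only [x, y, map_mul, map_add, map_one] using RingQuot.mkAlgHom_rel k (WeylRel.rel (k := k))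

theorem x_mul_y_pow (n : ℕ) : x k * y k ^ n = y k ^ n * x k + n • y k ^ (n - 1) := by
  induction n with
  | zero => simp
  | succ n ih =>
    rw [pow_succ, ← mul_assoc, ih, add_mul, mul_assoc, x_mul_y, mul_add, mul_one, ← mul_assoc,
      ← pow_succ, succ_nsmul, smul_mul_assoc, add_assoc]
    rcases n with _ | n
    · simp
    · simp only [Nat.add_sub_cancel, ← pow_succ]; abel

theorem x_pow_mul_y (n : ℕ) : x k ^ n * y k = y k * x k ^ n + n • x k ^ (n - 1) := by
  induction n with
  | zero => simp
  | succ n ih =>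
    rw [pow_succ', mul_assoc, ih, mul_add, ← mul_assoc, x_mul_y, add_mul, one_mul, mul_assoc,
      ← pow_succ', succ_nsmul, mul_smul_comm, add_assoc]
    rcases n with _ | n
    · simp
    · simp only [Nat.add_sub_cancel, ← pow_succ']; abel

theorem adjoin_x_y : Algebra.adjoin k {x k, y k} = ⊤ := by
  have hxy : ({x k, y k} : Set (Weyl k)) =
      RingQuot.mkAlgHom k (WeylRel k) '' Set.range (FreeAlgebra.ι k) := by
    ext w
    simp [Fin.exists_fin_two, x, y, eq_comm]
  rw [hxy, Algebra.adjoin_image, FreeAlgebra.adjoin_range_ι, Algebra.map_top,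
    AlgHom.range_eq_top]
  exact RingQuot.mkAlgHom_surjective k (WeylRel k)

theorem mem_center_iff {z : Weyl k} :
    z ∈ Subalgebra.center k (Weyl k) ↔ x k * z = z * x k ∧ y k * z = z * y k := by
  refine ⟨fun hz => ⟨Subalgebra.mem_center_iff.mp hz _, Subalgebra.mem_center_iff.mp hz _⟩, ?_⟩
  rintro ⟨hx, hy⟩
  have hz : z ∈ Subalgebra.centralizer k {x k, y k} := by
    rintro _ (rfl | rfl)
    exacts [hx, hy]
  refine Subalgebra.mem_center_iff.mpr fun w => ?_
  exact (Algebra.adjoin_le_centralizer_centralizer k _ (adjoin_x_y k ▸ Algebra.mem_top) z hz).symm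

theorem x_pow_mem_center (p : ℕ) [CharP k p] : x k ^ p ∈ Subalgebra.center k (Weyl k) := by
  have hp : p • x k ^ (p - 1) = 0 := by
    rw [← Nat.cast_smul_eq_nsmul k, CharP.cast_eq_zero, zero_smul]
  rw [mem_center_iff]
  exact ⟨(pow_mul_comm' _ _).symm, by rw [x_pow_mul_y, hp, add_zero]⟩

theorem y_pow_mem_center (p : ℕ) [CharP k p] : y k ^ p ∈ Subalgebra.center k (Weyl k) := by
  have hp : p • y k ^ (p - 1) = 0 := by
    rw [← Nat.cast_smul_eq_nsmul k, CharP.cast_eq_zero, zero_smul]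
  rw [mem_center_iff]
  exact ⟨by rw [x_mul_y_pow, hp, add_zero], (pow_mul_comm' _ _).symm⟩

noncomputable def monomial (i : ℕ × ℕ) : Weyl k := y k ^ i.1 * x k ^ i.2

theorem y_mul_monomial (i : ℕ × ℕ) : y k * monomial k i = monomial k (i.1 + 1, i.2) := by
  rw [monomial, monomial, ← mul_assoc, ← pow_succ']

theorem monomial_mul_x (i : ℕ × ℕ) : monomial k i * x k = monomial k (i.1, i.2 + 1) := by
  rw [monomial, monomial, mul_assoc, ← pow_succ]

theorem x_mul_monomial (i : ℕ × ℕ) :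
    x k * monomial k i = monomial k (i.1, i.2 + 1) + i.1 • monomial k (i.1 - 1, i.2) := by
  rw [monomial, ← mul_assoc, x_mul_y_pow, add_mul, smul_mul_assoc, mul_assoc, ← pow_succ']
  rfl

theorem monomial_mul_y (i : ℕ × ℕ) :
    monomial k i * y k = monomial k (i.1 + 1, i.2) + i.2 • monomial k (i.1, i.2 - 1) := by
  rw [monomial, mul_assoc, x_pow_mul_y, mul_add, ← mul_assoc, ← pow_succ, mul_smul_comm]
  rfl

theorem monomial_mem_adjoin_pow {p : ℕ} {i : ℕ × ℕ} (h₁ : p ∣ i.1) (h₂ : p ∣ i.2) :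
    monomial k i ∈ Algebra.adjoin k {x k ^ p, y k ^ p} := by
  obtain ⟨⟨a, ha⟩, ⟨b, hb⟩⟩ := And.intro h₁ h₂
  rw [monomial, ha, hb, pow_mul, pow_mul]
  exact mul_mem (pow_mem (Algebra.subset_adjoin (by simp)) _)
    (pow_mem (Algebra.subset_adjoin (by simp)) _)

theorem span_monomial : Submodule.span k (Set.range (monomial k)) = ⊤ := by
  set S := Submodule.span k (Set.range (monomial k))
  have hmem : ∀ i, monomial k i ∈ S := fun i => Submodule.subset_span ⟨i, rfl⟩
  have hgen : ∀ g ∈ ({x k, y k} : Set (Weyl k)), ∀ i, g * monomial k i ∈ S := by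
    rintro _ (rfl | rfl) i
    · rw [x_mul_monomial]
      exact add_mem (hmem _) (nsmul_mem (hmem _) _)
    · rw [y_mul_monomial]
      exact hmem _
  have hleftIdeal : ∀ w, ∀ s ∈ S, w * s ∈ S := by
    intro w
    induction (adjoin_x_y k ▸ Algebra.mem_top : w ∈ Algebra.adjoin k {x k, y k})
      using Algebra.adjoin_induction with
    | mem g hg =>
      intro s hs
      exact (Submodule.span_le (p := S.comap (LinearMap.mulLeft k g))).mpr
        (by rintro _ ⟨i, rfl⟩; exact hgen g hg i) hs
    | algebraMap r =>
      intro s hs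
      rw [← Algebra.smul_def]
      exact S.smul_mem r hs
    | add u v _ _ hu hv =>
      intro s hs
      rw [add_mul]
      exact add_mem (hu s hs) (hv s hs)
    | mul u v _ _ hu hv =>
      intro s hs
      rw [mul_assoc]
      exact hu _ (hv s hs)
  refine eq_top_iff.mpr fun w _ => ?_
  simpa [monomial] using hleftIdeal w _ (hmem (0, 0))

noncomputable def polyRep : Weyl k →ₐ[k] Module.End k (MvPolynomial (Fin 2) k) :=
  RingQuot.liftAlgHom k ⟨FreeAlgebra.lift k
    ![LinearMap.mulLeft k (X 0) + (pderiv 1).toLinearMap, LinearMap.mulLeft k (X 1)], by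
    rintro _ _ ⟨⟩
    refine LinearMap.ext fun f => ?_
    simp only [map_mul, map_add, map_one, FreeAlgebra.lift_ι_apply, Matrix.cons_val_zero,
      Matrix.cons_val_one, Module.End.mul_apply, LinearMap.add_apply, LinearMap.mulLeft_apply,
      Module.End.one_apply, Derivation.coeFn_coe, Derivation.leibniz, pderiv_X_self, smul_eq_mul]
    ring⟩

theorem polyRep_x :
    polyRep k (x k) = LinearMap.mulLeft k (X 0) + (pderiv 1).toLinearMap := by
  simp [polyRep, x]

theorem polyRep_y : polyRep k (y k) = LinearMap.mulLeft k (X 1) := by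
  simp [polyRep, y]

theorem polyRep_monomial_apply_one (i : ℕ × ℕ) :
    polyRep k (monomial k i) 1 = X 1 ^ i.1 * X 0 ^ i.2 := by
  have hx : ∀ n, (polyRep k (x k) ^ n) 1 = (X 0 ^ n : MvPolynomial (Fin 2) k) := by
    intro n
    induction n with
    | zero => simp
    | succ n ih =>
      rw [pow_succ', Module.End.mul_apply, ih, polyRep_x]
      simp [Derivation.leibniz_pow, pow_succ']
  rw [monomial, map_mul, map_pow, map_pow, Module.End.mul_apply, hx, polyRep_y,
    LinearMap.pow_mulLeft, LinearMap.mulLeft_apply]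

theorem linearIndependent_monomial : LinearIndependent k (monomial k) := by
  classical
  let exponent : ℕ × ℕ → Fin 2 →₀ ℕ := fun i => Finsupp.single 1 i.1 + Finsupp.single 0 i.2
  have exponent_injective : exponent.Injective := by
    intro i j hij
    have h0 := DFunLike.congr_fun hij 0
    have h1 := DFunLike.congr_fun hij 1
    simp [exponent] at h0 h1
    exact Prod.ext h1 h0
  refine LinearIndependent.of_comp (LinearMap.applyₗ 1 ∘ₗ (polyRep k).toLinearMap) ?_
  have hcomp : ⇑(LinearMap.applyₗ 1 ∘ₗ (polyRep k).toLinearMap) ∘ monomial k =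
      basisMonomials (Fin 2) k ∘ exponent := by
    ext1 i
    simp [polyRep_monomial_apply_one, exponent, MvPolynomial.X_pow_eq_monomial,
      MvPolynomial.monomial_mul]
  rw [hcomp]
  exact (basisMonomials (Fin 2) k).linearIndependent.comp _ exponent_injective

noncomputable def monomialBasis : Module.Basis (ℕ × ℕ) k (Weyl k) :=
  .mk (linearIndependent_monomial k) (span_monomial k).ge

theorem monomialBasis_apply (i : ℕ × ℕ) : monomialBasis k i = monomial k i :=
  Module.Basis.mk_apply _ _ _

theorem y_mul_commutator_x_monomial (i : ℕ × ℕ) :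
    y k * (x k * monomial k i - monomial k i * x k) = (i.1 : k) • monomial k i := by
  rw [x_mul_monomial, monomial_mul_x, add_sub_cancel_left, mul_smul_comm, y_mul_monomial,
    Nat.cast_smul_eq_nsmul]
  rcases i with ⟨_ | a, b⟩
  · simp
  · rfl

theorem commutator_y_monomial_mul_x (i : ℕ × ℕ) :
    (monomial k i * y k - y k * monomial k i) * x k = (i.2 : k) • monomial k i := by
  rw [monomial_mul_y, y_mul_monomial, add_sub_cancel_left, smul_mul_assoc, monomial_mul_x,
    Nat.cast_smul_eq_nsmul]
  rcases i with ⟨a, _ | b⟩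
  · simp
  · rfl

end CommRing

theorem dvd_of_mem_support_repr_of_mem_center (k : Type*) [CommRing k] [IsDomain k]
    (p : ℕ) [CharP k p] {z : Weyl k} (hz : z ∈ Subalgebra.center k (Weyl k)) {i : ℕ × ℕ}
    (hi : i ∈ ((monomialBasis k).repr z).support) : p ∣ i.1 ∧ p ∣ i.2 := by
  obtain ⟨hx, hy⟩ := (mem_center_iff k).mp hz
  have hzi : (monomialBasis k).repr z i ≠ 0 := Finsupp.mem_support_iff.mp hi
  have h₁ : (i.1 : k) * (monomialBasis k).repr z i = 0 := by
    rw [← (monomialBasis k).repr_map_apply_of_eigen (c := fun j => (j.1 : k))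
      (f := LinearMap.mulLeft k (y k) ∘ₗ (LinearMap.mulLeft k (x k) - LinearMap.mulRight k (x k)))
      (fun j => by simpa [monomialBasis_apply] using y_mul_commutator_x_monomial k j)]
    simp [hx]
  have h₂ : (i.2 : k) * (monomialBasis k).repr z i = 0 := by
    rw [← (monomialBasis k).repr_map_apply_of_eigen (c := fun j => (j.2 : k))
      (f := LinearMap.mulRight k (x k) ∘ₗ (LinearMap.mulRight k (y k) - LinearMap.mulLeft k (y k)))
      (fun j => by simpa [monomialBasis_apply] using commutator_y_monomial_mul_x k j)]
    simp [hy]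
  exact ⟨(CharP.cast_eq_zero_iff k p _).mp ((mul_eq_zero.mp h₁).resolve_right hzi),
    (CharP.cast_eq_zero_iff k p _).mp ((mul_eq_zero.mp h₂).resolve_right hzi)⟩

end Weyl

theorem center_of_weyl_algebra_general (k : Type*) [Field k]
    (p : ℕ) [CharP k p] :
    Subalgebra.center k (Weyl k) =
      Algebra.adjoin k {Weyl.x k ^ p, Weyl.y k ^ p} := by
  refine le_antisymm (fun z hz => ?_) ?_
  · rw [← (Weyl.monomialBasis k).linearCombination_repr z, Finsupp.linearCombination_apply]
    refine Subalgebra.sum_mem _ fun i hi => Subalgebra.smul_mem _ ?_ _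
    obtain ⟨h₁, h₂⟩ := Weyl.dvd_of_mem_support_repr_of_mem_center k p hz hi
    rw [Weyl.monomialBasis_apply]
    exact Weyl.monomial_mem_adjoin_pow k h₁ h₂
  · rw [Algebra.adjoin_le_iff, Set.insert_subset_iff, Set.singleton_subset_iff]
    exact ⟨Weyl.x_pow_mem_center k p, Weyl.y_pow_mem_center k p⟩

theorem center_of_weyl_algebra (k : Type*) [Field k] [IsAlgClosed k]
    (p : ℕ) (hp : p.Prime) [CharP k p] :
    Subalgebra.center k (Weyl k) =
      Algebra.adjoin k {Weyl.x k ^ p, Weyl.y k ^ p} :=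
  center_of_weyl_algebra_general k p
end

section
/- Let L ∈ M_r(k) be nilpotent. Then there exists a nilpotent M ∈ M_r(k) commuting with L such that the commutative algebra T = k[L,M] makes the natural module k^r a cyclic T-module. -/
/-!
Through `L`, `k^r` becomes a finitely generated `X`-power torsion `k[X]`-module, hence a direct sum
of cyclic modules `k[X] ⧸ (X ^ eⱼ)`, which we order so that `e₀ ≥ e₁ ≥ ⋯`. The ideals `(X ^ eⱼ)`
then increase with `j`, so shifting the `j`-th summand into the `(j + 1)`-st by the quotient map is
a well-defined nilpotent `k[X]`-linear endomorphism `M`. Its powers carry the generator `1` of the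
first summand to the generators of all the others, so `k^r` is cyclic over `k[L, M]`.
-/

open Polynomial Submodule

namespace Module

variable (R M : Type*) [CommRing R] [AddCommGroup M] [Module R M]

def HasNilpotentCyclicEnd : Prop :=
  ∃ g : Module.End R M, IsNilpotent g ∧ ∃ v : M, span R (Set.range fun n : ℕ => (g ^ n) v) = ⊤

variable {R M}

theorem HasNilpotentCyclicEnd.of_linearEquiv {M' : Type*} [AddCommGroup M'] [Module R M']
    (h : HasNilpotentCyclicEnd R M) (e : M ≃ₗ[R] M') : HasNilpotentCyclicEnd R M' := by
  obtain ⟨g, hg, v, hv⟩ := h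
  refine ⟨e.conjAlgEquiv R g, hg.map _, e v, ?_⟩
  have hpow : ∀ n : ℕ, (e.conjAlgEquiv R g ^ n) (e v) = e ((g ^ n) v) := fun n => by
    rw [← map_pow, LinearEquiv.conjAlgEquiv_apply, LinearMap.comp_apply, LinearMap.comp_apply,
      LinearEquiv.coe_coe, LinearEquiv.coe_coe, LinearEquiv.symm_apply_apply]
  rw [funext hpow, Set.range_comp', ← LinearEquiv.coe_coe, span_image, hv, Submodule.map_top,
    LinearEquiv.range]

end Module

section Shift

variable (R M : Type*) [Semiring R] [AddCommMonoid M] [Module R M] (m : ℕ)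

def finShift : Module.End R (Fin m → M) where
  toFun w j := if h : (j : ℕ) = 0 then 0 else w ⟨j - 1, by omega⟩
  map_add' w w' := by ext j; by_cases h : (j : ℕ) = 0 <;> simp [h]
  map_smul' c w := by ext j; by_cases h : (j : ℕ) = 0 <;> simp [h]

variable {R M m}

lemma finShift_apply (w : Fin m → M) (j : Fin m) :
    finShift R M m w j = if h : (j : ℕ) = 0 then 0 else w ⟨j - 1, by omega⟩ := rfl

lemma finShift_pow_apply_of_lt (w : Fin m → M) {a : ℕ} {j : Fin m} (hj : (j : ℕ) < a) :
    (finShift R M m ^ a) w j = 0 := by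
  induction a generalizing j with
  | zero => omega
  | succ a ih =>
    rw [pow_succ', Module.End.mul_apply, finShift_apply]
    split_ifs with h
    · rfl
    · exact ih (show (j : ℕ) - 1 < a by omega)

lemma finShift_pow_eq_zero : finShift R M m ^ m = 0 :=
  LinearMap.ext fun w => funext fun j => finShift_pow_apply_of_lt w j.isLt

lemma finShift_pow_indicator (x : M) (a : ℕ) :
    (finShift R M m ^ a) (fun j : Fin m => if (j : ℕ) = 0 then x else 0) =
      fun j : Fin m => if (j : ℕ) = a then x else 0 := by
  induction a with
  | zero => rfl
  | succ a ih =>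
    ext j
    rw [pow_succ', Module.End.mul_apply, ih, finShift_apply]
    split_ifs <;> simp_all; omega

end Shift

section QuotientPi

variable {R : Type*} [CommRing R] {m : ℕ} (I : Fin m → Ideal R)

lemma pi_le_comap_finShift (hI : Monotone I) :
    pi Set.univ I ≤ (pi Set.univ I).comap (finShift R R m) := by
  intro w hw j _
  rw [mem_pi] at hw
  rw [finShift_apply]
  split_ifs with h
  · exact zero_mem _
  · exact hI (Fin.mk_le_mk.mpr (by omega)) (hw _ (Set.mem_univ _))

theorem hasNilpotentCyclicEnd_quotient_pi (hI : Monotone I) :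
    Module.HasNilpotentCyclicEnd R ((Fin m → R) ⧸ pi Set.univ I) := by
  have hS := pi_le_comap_finShift I hI
  refine ⟨mapQ _ _ _ hS, ⟨m, ?_⟩, mkQ _ fun j => if (j : ℕ) = 0 then 1 else 0, ?_⟩
  · rw [← mapQ_pow]
    ext w
    simp [finShift_pow_eq_zero]
  · have hbasis : ∀ j : Fin m, mkQ _ (Pi.basisFun R (Fin m) j) =
        (mapQ _ _ _ hS ^ (j : ℕ)) (mkQ _ fun j => if (j : ℕ) = 0 then 1 else 0) := by
      intro j
      rw [← mapQ_pow, mkQ_apply, mkQ_apply, mapQ_apply, finShift_pow_indicator]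
      congr 1
      ext i
      simp [Pi.single_apply, Fin.ext_iff]
    rw [eq_top_iff, ← range_mkQ, LinearMap.range_eq_map, ← (Pi.basisFun R (Fin m)).span_eq,
      map_span, ← Set.range_comp]
    exact span_mono (Set.range_subset_iff.mpr fun j => ⟨j, (hbasis j).symm⟩)

end QuotientPi

theorem Module.hasNilpotentCyclicEnd_of_isTorsion'_powers {R M : Type*} [CommRing R]
    [IsDomain R] [IsPrincipalIdealRing R] [AddCommGroup M] [Module R M] [Module.Finite R M]
    {p : R} (hp : Irreducible p) (hM : IsTorsion' M (Submonoid.powers p)) :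
    HasNilpotentCyclicEnd R M := by
  obtain ⟨d, e, ⟨iso⟩⟩ := Module.torsion_by_prime_power_decomposition hp hM
  let σ := Tuple.sort (OrderDual.toDual ∘ e)
  have hσ : Antitone (e ∘ σ) := Tuple.monotone_sort (OrderDual.toDual ∘ e)
  let I : Fin d → Ideal R := fun j => R ∙ p ^ e (σ j)
  have hI : Monotone I := fun i j hij =>
    Ideal.span_singleton_le_span_singleton.mpr (pow_dvd_pow p (hσ hij))
  exact (hasNilpotentCyclicEnd_quotient_pi I hI).of_linearEquiv <|
    quotientPi I ≪≫ₗ LinearEquiv.piCongrLeft R (fun i => R ⧸ R ∙ p ^ e i) σ ≪≫ₗ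
      (DirectSum.linearEquivFunOnFintype R (Fin d) _).symm ≪≫ₗ iso.symm

theorem Module.AEval'.exists_mem_adjoin_of_mem_span {k V : Type*} [CommRing k] [AddCommGroup V]
    [Module k V] {f g : Module.End k V} {v : V} {y : AEval' f}
    (hy : y ∈ span k[X] (Set.range fun n : ℕ => AEval'.of f ((g ^ n) v))) :
    ∃ t ∈ Algebra.adjoin k {f, g}, AEval'.of f (t v) = y := by
  induction hy using span_induction with
  | mem y hy =>
    obtain ⟨n, rfl⟩ := hy
    exact ⟨g ^ n, pow_mem (Algebra.subset_adjoin (by simp)) n, rfl⟩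
  | zero => exact ⟨0, zero_mem _, by simp⟩
  | add y z _ _ hy hz =>
    obtain ⟨t, ht, rfl⟩ := hy
    obtain ⟨s, hs, rfl⟩ := hz
    exact ⟨t + s, add_mem ht hs, by simp⟩
  | smul q y _ hy =>
    obtain ⟨t, ht, rfl⟩ := hy
    have hq : aeval f q ∈ Algebra.adjoin k {f, g} :=
      Algebra.adjoin_mono (Set.singleton_subset_iff.mpr (by simp)) (aeval_mem_adjoin_singleton k f)
    exact ⟨aeval f q * t, mul_mem hq ht, AEval.of_aeval_smul f q (t v)⟩

theorem Module.End.exists_isNilpotent_commute_cyclic {k V : Type*} [Field k] [AddCommGroup V]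
    [Module k V] [FiniteDimensional k V] (f : Module.End k V) (hf : IsNilpotent f) :
    ∃ g : Module.End k V, IsNilpotent g ∧ Commute f g ∧
      ∃ v, ∀ w, ∃ t ∈ Algebra.adjoin k {f, g}, t v = w := by
  obtain ⟨n, hn⟩ := hf
  have hM : IsTorsion' (AEval' f) (Submonoid.powers (X : k[X])) := fun x =>
    ⟨⟨X ^ n, n, rfl⟩, show (X ^ n : k[X]) • x = 0 by
      simpa [hn] using AEval'.X_pow_smul_of f ((AEval'.of f).symm x) n⟩
  obtain ⟨G, ⟨N, hN⟩, v, hv⟩ := hasNilpotentCyclicEnd_of_isTorsion'_powers irreducible_X hM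
  let g : Module.End k V := (AEval'.of f).symm.conjAlgEquiv k (G.restrictScalars k)
  have hg_pow : ∀ (m : ℕ) (x : V), AEval'.of f ((g ^ m) x) = (G ^ m) (AEval'.of f x) := by
    intro m x
    induction m generalizing x with
    | zero => rfl
    | succ m ih => rw [pow_succ, Module.End.mul_apply, ih, pow_succ, Module.End.mul_apply]; rfl
  refine ⟨g, ⟨N, ?_⟩, ?_, (AEval'.of f).symm v, fun w => ?_⟩
  · ext x
    simpa [hN] using hg_pow N x
  · ext x
    apply (AEval'.of f).injective
    rw [Module.End.mul_apply, Module.End.mul_apply, ← AEval'.X_smul_of, ← pow_one g, hg_pow,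
      hg_pow, ← AEval'.X_smul_of, map_smul]
  · have hrange : (fun n : ℕ => (G ^ n) v) =
        fun n => AEval'.of f ((g ^ n) ((AEval'.of f).symm v)) := funext fun n => (hg_pow n _).symm
    have hw : AEval'.of f w ∈ span k[X] (Set.range fun n : ℕ => (G ^ n) v) := hv ▸ mem_top
    rw [hrange] at hw
    obtain ⟨t, ht, htw⟩ := AEval'.exists_mem_adjoin_of_mem_span hw
    exact ⟨t, ht, (AEval'.of f).injective htw⟩

theorem exists_commuting_nilpotent_cyclic_general
    {k : Type*} [Field k] {r : ℕ}
    (L : Matrix (Fin r) (Fin r) k) (hL : IsNilpotent L) :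
    ∃ M : Matrix (Fin r) (Fin r) k, IsNilpotent M ∧ L * M = M * L ∧
      ∃ v : Fin r → k, ∀ w : Fin r → k,
        ∃ t ∈ Algebra.adjoin k {L, M}, t.mulVec v = w := by
  let α : Matrix (Fin r) (Fin r) k ≃ₐ[k] Module.End k (Fin r → k) := Matrix.toLinAlgEquiv'
  obtain ⟨g, hg, hLg, v, hv⟩ := Module.End.exists_isNilpotent_commute_cyclic (α L) (hL.map α)
  refine ⟨α.symm g, hg.map α.symm, by simpa using (hLg.map α.symm).eq, v, fun w => ?_⟩
  obtain ⟨t, ht, rfl⟩ := hv w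
  have hmap : α.symm t ∈ (Algebra.adjoin k {α L, g}).map (α.symm : _ →ₐ[k] _) := ⟨t, ht, rfl⟩
  rw [AlgHom.map_adjoin, Set.image_pair] at hmap
  refine ⟨α.symm t, by simpa using hmap, ?_⟩
  rw [← Matrix.toLinAlgEquiv'_apply, AlgEquiv.apply_symm_apply]

theorem exists_commuting_nilpotent_cyclic
    {k : Type*} [Field k] [IsAlgClosed k] {r : ℕ}
    (L : Matrix (Fin r) (Fin r) k) (hL : IsNilpotent L) :
    ∃ M : Matrix (Fin r) (Fin r) k, IsNilpotent M ∧ L * M = M * L ∧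
      ∃ v : Fin r → k, ∀ w : Fin r → k,
        ∃ t ∈ Algebra.adjoin k {L, M}, t.mulVec v = w :=
  exists_commuting_nilpotent_cyclic_general L hL
end

section
/- Let A be a finitely generated torsion-free Z-algebra which is a domain of Krull dimension d. Then the Q-algebra B = A ⊗ Q has Krull dimension strictly less than d. -/
/-! `ℚ ⊗ A` is the localization of `A` at the nonzero integers, so its primes are the primes of `A`
meeting no nonzero integer, ordered as in `A`. By the Nullstellensatz over `ℤ` every maximal ideal
of `A` has a finite residue field and hence contains a nonzero integer, so every chain of primes of
`ℚ ⊗ A` extends, inside `A`, by one more prime. -/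

instance Int.isJacobsonRing : IsJacobsonRing ℤ := by
  rw [isJacobsonRing_iff_prime_eq]
  intro P hP
  rcases eq_or_ne P ⊥ with rfl | hP_ne
  · ext x
    simp only [Ideal.mem_jacobson_bot, Ideal.mem_bot]
    refine ⟨fun H => ?_, by rintro rfl y; simp⟩
    have h1 := Int.isUnit_iff.mp (H 1)
    have h2 := Int.isUnit_iff.mp (H (-1))
    omega
  · have := hP.isMaximal hP_ne
    exact Ideal.jacobson_eq_self_of_isMaximal

theorem Order.krullDim_add_one_le_of_strictMono {α β : Type*} [Preorder α] [Preorder β]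
    {f : α → β} (hf : StrictMono f) (hf_max : ∀ a, ¬IsMax (f a)) :
    krullDim α + 1 ≤ krullDim β := by
  rcases isEmpty_or_nonempty α with hα | hα
  · simp [krullDim_eq_bot]
  have : Nonempty β := hα.map f
  rw [krullDim_eq_iSup_length, krullDim_eq_iSup_length, ← WithBot.coe_one, ← WithBot.coe_add,
    WithBot.coe_le_coe, ENat.iSup_add]
  refine iSup_le fun p => ?_
  obtain ⟨b, hb⟩ := not_isMax_iff.mp (hf_max p.last)
  exact le_iSup_of_le ((p.map f hf).snoc b (by simpa using hb)) (by simp)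

theorem ringKrullDim_add_one_le_of_isLocalization {R S : Type*} [CommRing R] [CommRing S]
    [Algebra R S] (M : Submonoid R) [IsLocalization M S]
    (hM : ∀ m : Ideal R, m.IsMaximal → ∃ x ∈ M, x ∈ m) :
    ringKrullDim S + 1 ≤ ringKrullDim R := by
  refine Order.krullDim_add_one_le_of_strictMono (f := PrimeSpectrum.comap (algebraMap R S))
    (Monotone.strictMono_of_injective (fun _ _ h => Ideal.comap_mono h)
      (PrimeSpectrum.localization_comap_injective S M)) fun q hq => ?_
  obtain ⟨x, hxM, hxq⟩ := hM _ (PrimeSpectrum.isMax_iff.mp hq)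
  exact q.isPrime.ne_top (Ideal.eq_top_of_isUnit_mem _ hxq (IsLocalization.map_units S ⟨x, hxM⟩))

theorem Ideal.IsMaximal.comap_of_isJacobsonRing {R A : Type*} [CommRing R] [CommRing A]
    [Algebra R A] [IsJacobsonRing R] [Algebra.FiniteType R A] (m : Ideal A) [m.IsMaximal] :
    (m.comap (algebraMap R A)).IsMaximal := by
  let := Ideal.Quotient.field m
  have := finite_of_finite_type_of_isJacobsonRing R (A ⧸ m)
  have := Ideal.isMaximal_comap_of_isIntegral_of_isMaximal (R := R) (⊥ : Ideal (A ⧸ m))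
  rwa [IsScalarTower.algebraMap_eq R A (A ⧸ m), ← Ideal.comap_comap, ← RingHom.ker_eq_comap_bot,
    Ideal.Quotient.algebraMap_eq, Ideal.mk_ker] at this

theorem exists_intCast_ne_zero_mem_of_isMaximal {A : Type*} [CommRing A] [Algebra.FiniteType ℤ A]
    (m : Ideal A) [m.IsMaximal] : ∃ n : ℤ, n ≠ 0 ∧ (n : A) ∈ m := by
  have hm := Ideal.IsMaximal.comap_of_isJacobsonRing (R := ℤ) m
  have : m.comap (algebraMap ℤ A) ≠ ⊥ := fun h =>
    Int.not_isField (Ring.isField_iff_maximal_bot.mpr (h ▸ hm))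
  obtain ⟨n, hn, hn0⟩ := Submodule.exists_mem_ne_zero_of_ne_bot this
  exact ⟨n, hn0, by simpa using hn⟩

open scoped TensorProduct in
theorem krullDim_rat_tensor_lt_general
    {A : Type*} [CommRing A]
    [Algebra.FiniteType ℤ A]
    (d : ℕ) (hd : ringKrullDim A = d) :
    ringKrullDim (ℚ ⊗[ℤ] A) < d := by
  let := Algebra.TensorProduct.rightAlgebra (R := ℤ) (A := ℚ) (B := A)
  have hle : ringKrullDim (ℚ ⊗[ℤ] A) + 1 ≤ d := by
    rw [← hd]
    refine ringKrullDim_add_one_le_of_isLocalization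
      (Algebra.algebraMapSubmonoid A (nonZeroDivisors ℤ)) fun m hm => ?_
    obtain ⟨n, hn0, hn⟩ := exists_intCast_ne_zero_mem_of_isMaximal m
    exact ⟨n, ⟨n, mem_nonZeroDivisors_of_ne_zero hn0, by simp⟩, hn⟩
  exact ENat.WithBot.add_one_le_natCast_iff.mp hle

open scoped TensorProduct in
theorem krullDim_rat_tensor_lt
    {A : Type*} [CommRing A] [IsDomain A]
    [Algebra.FiniteType ℤ A] [NoZeroSMulDivisors ℤ A]
    (d : ℕ) (hd : ringKrullDim A = d) :
    ringKrullDim (ℚ ⊗[ℤ] A) < d :=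
  krullDim_rat_tensor_lt_general d hd
end
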